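/- Fix integers n ≥ 2 and k ≥ 3, a constant b_k < 0, δ ∈ (0, 1/2), and a constant B₃ > 0; set c_k := 2(n−1)k²(−b_k)^{2/k} and γ_k := 1/2 − 1/k. Define A₄⁻ and A₄⁺ by (A₄⁻)^{−2} = (1+δ)(1 + (3/8)B₃^{−2})(1−δ)c_k and (A₄⁺)^{−2} = (1−δ)(1 + (1/2)B₃^{−2})(1+δ)c_k (so A₄⁺ < A₄⁻). Let 𝔅 be a Bryant soliton profile and let β : (0,∞) → ℝ be a bounded function with β(r) = (1 + o(1)) r² as r ↘ 0. Then there exist B₄ > 0 sufficiently small and a time τ₅ such that z₋(r,τ) := 𝔅(A₄⁻ r) − e^{−2γ_k τ} β(r) and z₊(r,τ) := 𝔅(A₄⁺ r) + e^{−2γ_k τ} β(r) satisfy z₋(r,τ) < z₊(r,τ) for all 0 < r ≤ B₄ e^{γ_k τ} and all τ ≥ τ₅. -/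

import Mathlib

open Topology Filter Asymptotics Set

/-- `γ_k = 1/2 - 1/k`. -/
noncomputable def gam (k : ℕ) : ℝ := 1/2 - 1/(k:ℝ)

/-- `c_k = 2(n-1)k²(-b_k)^{2/k}`. -/
noncomputable def ck (n k : ℕ) (bk : ℝ) : ℝ :=
  2 * ((n:ℝ) - 1) * (k:ℝ)^2 * (-bk) ^ ((2:ℝ)/(k:ℝ))

/-- The elliptic operator
`E_r[z] = z z'' - (1/2)(z')² + (n-1-z)z'/r + 2(n-1)(1-z)z/r²`. -/
noncomputable def Eop (n : ℕ) (z : ℝ → ℝ) (r : ℝ) : ℝ :=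
  z r * deriv (deriv z) r - (1/2) * (deriv z r)^2
    + ((n:ℝ) - 1 - z r) * deriv z r / r
    + 2 * ((n:ℝ) - 1) * (1 - z r) * z r / r^2

/-- A Bryant soliton profile. -/
structure BryantProfile (n : ℕ) where
  toFun : ℝ → ℝ
  b : ℝ
  b2 : ℝ
  ctilde : ℝ
  smooth : ContDiffOn ℝ (⊤ : ℕ∞) toFun (Set.Ici 0)
  mem_Ioc : ∀ r : ℝ, 0 ≤ r → toFun r ∈ Set.Ioc (0:ℝ) 1
  val_zero : toFun 0 = 1
  deriv_zero : deriv toFun 0 = 0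
  deriv_neg : ∀ r : ℝ, 0 < r → deriv toFun r < 0
  soliton : ∀ r : ℝ, 0 < r → Eop n toFun r = 0
  b_pos : 0 < b
  expand_zero : (fun ρ => toFun ρ - (1 - b * ρ^2)) =O[𝓝[>] (0:ℝ)] fun ρ => ρ^4
  expand_zero_deriv :
    (fun ρ => deriv toFun ρ + 2 * b * ρ) =O[𝓝[>] (0:ℝ)] fun ρ => ρ^3
  expand_top :
    (fun ρ => toFun ρ - (ρ ^ (-2:ℝ) + b2 * ρ ^ (-4:ℝ))) =O[atTop] fun ρ => ρ ^ (-6:ℝ)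
  expand_top_deriv :
    (fun ρ => deriv toFun ρ - (-2 * ρ ^ (-3:ℝ) - 4 * b2 * ρ ^ (-5:ℝ)))
      =O[atTop] fun ρ => ρ ^ (-7:ℝ)
  ctilde_pos : 0 < ctilde
  deriv_lower : ∀ r : ℝ, 0 < r → ctilde * min (r^2) (r ^ (-2:ℝ)) ≤ -(r * deriv toFun r)

/-- `A₄⁻`, defined by `(A₄⁻)⁻² = (1+δ)(1 + (3/8)B₃⁻²)(1-δ)c_k`. -/
noncomputable def A4minus (n k : ℕ) (bk δ B₃ : ℝ) : ℝ :=
  1 / Real.sqrt ((1 + δ) * (1 + (3/8) / B₃^2) * (1 - δ) * ck n k bk)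

/-- `A₄⁺`, defined by `(A₄⁺)⁻² = (1-δ)(1 + (1/2)B₃⁻²)(1+δ)c_k`. -/
noncomputable def A4plus (n k : ℕ) (bk δ B₃ : ℝ) : ℝ :=
  1 / Real.sqrt ((1 - δ) * (1 + (1/2) / B₃^2) * (1 + δ) * ck n k bk)

/-!
Both profiles are rescalings of the same strictly decreasing `𝔅`, and `A₄⁺ < A₄⁻`, so
`𝔅(A₄⁺ r) - 𝔅(A₄⁻ r) > 0`; the claim is that this gap beats `2 e^{-2γ_k τ} |β(r)|`.
Near `r = 0` we have `β ≥ 0`, so there is nothing to prove. Away from `0`, the mean value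
theorem and `-ρ𝔅'(ρ) ≥ c̃ min(ρ², ρ⁻²)` bound the gap below by `C r⁻²`, while
`r ≤ B₄ e^{γ_k τ}` gives `e^{-2γ_k τ} ≤ B₄² r⁻²`; a small `B₄` then absorbs the bound on `β`.
-/

theorem eventually_nonneg_of_isLittleO_sub {α : Type*} {l : Filter α} {f g : α → ℝ}
    (h : (fun x => f x - g x) =o[l] g) (hg : ∀ᶠ x in l, 0 ≤ g x) : ∀ᶠ x in l, 0 ≤ f x := by
  filter_upwards [h.def one_half_pos, hg] with x hx hgx
  rw [Real.norm_eq_abs, Real.norm_eq_abs, abs_of_nonneg hgx] at hx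
  linarith [(abs_le.mp hx).1]

theorem exp_neg_two_mul_le_div_sq {r B g τ : ℝ} (hr : 0 < r)
    (h : r ≤ B * Real.exp (g * τ)) : Real.exp (-2 * g * τ) ≤ B ^ 2 / r ^ 2 := by
  rw [le_div_iff₀ (by positivity)]
  calc Real.exp (-2 * g * τ) * r ^ 2
      ≤ Real.exp (-2 * g * τ) * (B * Real.exp (g * τ)) ^ 2 := by gcongr
    _ = B ^ 2 := by
      rw [mul_pow, ← Real.exp_nat_mul, mul_left_comm, ← Real.exp_add]
      simp only [Nat.cast_ofNat]
      rw [show -2 * g * τ + 2 * (g * τ) = 0 by ring, Real.exp_zero, mul_one]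

section Constants

variable {n k : ℕ} {bk δ B₃ : ℝ}

theorem ck_pos (hn : 2 ≤ n) (hk : 0 < k) (hbk : bk < 0) : 0 < ck n k bk := by
  have hn' : (0:ℝ) < n - 1 := by
    have : (2:ℝ) ≤ n := by exact_mod_cast hn
    linarith
  have hk' : (0:ℝ) < k := by exact_mod_cast hk
  unfold ck
  have := Real.rpow_pos_of_pos (neg_pos.mpr hbk) ((2:ℝ) / k)
  positivity

theorem A4plus_pos (hδ : δ ∈ Ioo (-1) 1) (hc : 0 < ck n k bk) : 0 < A4plus n k bk δ B₃ := by
  have h₁ : 0 < 1 + δ := by linarith [hδ.1]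
  have h₂ : 0 < 1 - δ := by linarith [hδ.2]
  unfold A4plus
  positivity

theorem A4plus_lt_A4minus (hδ : δ ∈ Ioo (-1) 1) (hB₃ : B₃ ≠ 0) (hc : 0 < ck n k bk) :
    A4plus n k bk δ B₃ < A4minus n k bk δ B₃ := by
  have hP : 0 < (1 + δ) * (1 - δ) * ck n k bk :=
    mul_pos (mul_pos (by linarith [hδ.1]) (by linarith [hδ.2])) hc
  have hB : (3/8) / B₃ ^ 2 < (1/2) / B₃ ^ 2 :=
    div_lt_div_of_pos_right (by norm_num) (by positivity)
  have hX : 0 < (1 + δ) * (1 + (3/8) / B₃ ^ 2) * (1 - δ) * ck n k bk :=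
    calc 0 < ((1 + δ) * (1 - δ) * ck n k bk) * (1 + (3/8) / B₃ ^ 2) := by positivity
      _ = _ := by ring
  unfold A4minus A4plus
  apply one_div_lt_one_div_of_lt (Real.sqrt_pos.mpr hX)
  apply Real.sqrt_lt_sqrt hX.le
  calc (1 + δ) * (1 + (3/8) / B₃ ^ 2) * (1 - δ) * ck n k bk
      = ((1 + δ) * (1 - δ) * ck n k bk) * (1 + (3/8) / B₃ ^ 2) := by ring
    _ < ((1 + δ) * (1 - δ) * ck n k bk) * (1 + (1/2) / B₃ ^ 2) := by gcongr
    _ = (1 - δ) * (1 + (1/2) / B₃ ^ 2) * (1 + δ) * ck n k bk := by ring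

end Constants

namespace BryantProfile

variable {n : ℕ} (𝔅 : BryantProfile n)

theorem strictAntiOn : StrictAntiOn 𝔅.toFun (Ici 0) :=
  strictAntiOn_of_deriv_neg (convex_Ici 0) 𝔅.smooth.continuousOn fun x hx =>
    𝔅.deriv_neg x (by rwa [interior_Ici] at hx)

theorem differentiableAt {x : ℝ} (hx : 0 < x) : DifferentiableAt ℝ 𝔅.toFun x :=
  (𝔅.smooth.contDiffAt (Ici_mem_nhds hx)).differentiableAt (by simp)

theorem div_cube_le_neg_deriv {a ξ : ℝ} (ha : 0 < a) (haξ : a ≤ ξ) :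
    𝔅.ctilde * min 1 (a ^ 4) / ξ ^ 3 ≤ -deriv 𝔅.toFun ξ := by
  have hξ : 0 < ξ := ha.trans_le haξ
  have hmin : min 1 (a ^ 4) / ξ ^ 2 ≤ min (ξ ^ 2) (ξ ^ (-2:ℝ)) := by
    rw [Real.rpow_neg hξ.le, Real.rpow_two, ← one_div]
    refine le_min ?_ (by gcongr; exact min_le_left _ _)
    rw [div_le_iff₀ (by positivity), ← pow_add]
    exact (min_le_right _ _).trans (pow_le_pow_left₀ ha.le haξ 4)
  have hlow : 𝔅.ctilde * (min 1 (a ^ 4) / ξ ^ 2) ≤ ξ * -deriv 𝔅.toFun ξ := by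
    rw [mul_neg]
    exact (mul_le_mul_of_nonneg_left hmin 𝔅.ctilde_pos.le).trans (𝔅.deriv_lower ξ hξ)
  rw [show ξ ^ 3 = ξ ^ 2 * ξ by ring, ← div_div, mul_div_assoc, div_le_iff₀ hξ]
  linarith

theorem exists_div_sq_le_sub {a b r₀ : ℝ} (ha : 0 < a) (hab : a < b) (hr₀ : 0 < r₀) :
    ∃ C > 0, ∀ r, r₀ ≤ r → C / r ^ 2 ≤ 𝔅.toFun (a * r) - 𝔅.toFun (b * r) := by
  have hb : 0 < b := ha.trans hab
  set K := 𝔅.ctilde * min 1 ((a * r₀) ^ 4)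
  have hK : 0 < K := mul_pos 𝔅.ctilde_pos (lt_min one_pos (by positivity))
  refine ⟨K * (b - a) / b ^ 3, by have := sub_pos.mpr hab; positivity, fun r hr => ?_⟩
  have hr' : 0 < r := hr₀.trans_le hr
  have har : 0 < a * r := mul_pos ha hr'
  have habr : a * r < b * r := mul_lt_mul_of_pos_right hab hr'
  obtain ⟨ξ, hξ, hslope⟩ := exists_deriv_eq_slope 𝔅.toFun habr
    (𝔅.smooth.continuousOn.mono fun x hx => le_trans har.le hx.1)
    (fun x hx => (𝔅.differentiableAt (har.trans hx.1)).differentiableWithinAt)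
  have hderiv : K / (b * r) ^ 3 ≤ -deriv 𝔅.toFun ξ :=
    calc K / (b * r) ^ 3 ≤ K / ξ ^ 3 := by
          have : 0 < ξ := har.trans hξ.1
          gcongr
          exact hξ.2.le
      _ ≤ -deriv 𝔅.toFun ξ := 𝔅.div_cube_le_neg_deriv (mul_pos ha hr₀)
          ((mul_le_mul_of_nonneg_left hr ha.le).trans hξ.1.le)
  calc K * (b - a) / b ^ 3 / r ^ 2 = K / (b * r) ^ 3 * (b * r - a * r) := by
        field_simp
    _ ≤ -deriv 𝔅.toFun ξ * (b * r - a * r) := by gcongr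
    _ = 𝔅.toFun (a * r) - 𝔅.toFun (b * r) := by
        rw [hslope, neg_mul, div_mul_cancel₀ _ (sub_pos.mpr habr).ne']
        ring

end BryantProfile

theorem stmt7 (n k : ℕ) (hn : 2 ≤ n) (hk : 3 ≤ k) (bk : ℝ) (hbk : bk < 0)
    (δ : ℝ) (hδ : δ ∈ Set.Ioo (0:ℝ) (1/2)) (B₃ : ℝ) (hB₃ : 0 < B₃)
    (𝔅 : BryantProfile n) (β : ℝ → ℝ) (M : ℝ)
    (hβbdd : ∀ r : ℝ, 0 < r → |β r| ≤ M)
    (hβ0 : (fun r => β r - r^2) =o[𝓝[>] (0:ℝ)] fun r => r^2) :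
    ∃ B₄ τ₅ : ℝ, 0 < B₄ ∧
      ∀ r τ : ℝ, 0 < r → r ≤ B₄ * Real.exp (gam k * τ) → τ₅ ≤ τ →
        𝔅.toFun (A4minus n k bk δ B₃ * r) - Real.exp (-2 * gam k * τ) * β r
          < 𝔅.toFun (A4plus n k bk δ B₃ * r) + Real.exp (-2 * gam k * τ) * β r := by
  have hc := ck_pos (k := k) hn (by omega) hbk
  have hδ' : δ ∈ Ioo (-1 : ℝ) 1 := ⟨by linarith [hδ.1], by linarith [hδ.2]⟩
  have ha := A4plus_pos (B₃ := B₃) hδ' hc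
  have hab := A4plus_lt_A4minus hδ' hB₃.ne' hc
  obtain ⟨r₀, hr₀, hβnonneg⟩ := mem_nhdsGT_iff_exists_Ioo_subset.mp
    (eventually_nonneg_of_isLittleO_sub hβ0 (Eventually.of_forall sq_nonneg))
  obtain ⟨C, hC, hgap⟩ := 𝔅.exists_div_sq_le_sub ha hab hr₀
  have hM : 0 ≤ M := (abs_nonneg _).trans (hβbdd 1 one_pos)
  refine ⟨√(C / (2 * M + 1)), 0, by positivity, fun r τ hr hrB _ => ?_⟩
  have he := Real.exp_pos (-2 * gam k * τ)
  rcases lt_or_ge r r₀ with hsmall | hlarge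
  · have hlt : 𝔅.toFun (A4minus n k bk δ B₃ * r) < 𝔅.toFun (A4plus n k bk δ B₃ * r) :=
      𝔅.strictAntiOn (mul_pos ha hr).le (mul_pos (ha.trans hab) hr).le
        (mul_lt_mul_of_pos_right hab hr)
    have hβr : 0 ≤ β r := hβnonneg ⟨hr, hsmall⟩
    linarith [mul_nonneg he.le hβr]
  · have hexp := exp_neg_two_mul_le_div_sq hr hrB
    rw [Real.sq_sqrt (by positivity), div_right_comm, le_div_iff₀ (by positivity)] at hexp
    linarith [hgap r hlarge, mul_le_mul_of_nonneg_left (abs_le.mp (hβbdd r hr)).1 he.le]
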